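/- Let f : {-1,1}^n → ℝ be odd and not identically zero. Then there exists x* maximizing f, and considering the chain of subcubes C_i (i = 1,…,n+1) where C_i fixes coordinates i,…,n to x*_i,…,x*_n (C_{n+1} being the full cube), there exists i ∈ [n] such that the restriction of f to C_{i+1} has a degree-1 Fourier coefficient |f̂_{C_{i+1}}({i})| ≥ ‖f‖_∞ / n; consequently Var(f restricted to C_{i+1}) ≥ ‖f‖_∞² / n². -/

import Mathlib

/-!
Let `x*` maximise `f`; oddness gives `f x* = ‖f‖_∞` and `E f = 0`. Re-randomise the coordinates
of `x*` one at a time: the means of the successive restrictions telescope from `f x*` to `E f`,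
so some step `i` changes the mean by at least `‖f‖_∞ / n`. Averaging over the coordinate that
was just freed, that change is `±` the coefficient `f̂_{C_{i+1}}({i})` (`sum_mul_bsgn_eq`).
Finally a degree-1 coefficient squared is at most the variance, by Cauchy–Schwarz against the
centred function, since the character `x ↦ x_i` has mean zero and square one.
-/

open Finset

noncomputable section

/-- sign of a bit: `true` ↦ -1 (representing the bit -1), `false` ↦ 1. -/
def bsgn (b : Bool) : ℝ := if b then -1 else 1

/-- character χ_S(x) = ∏_{i ∈ S} x_i on the cube {-1,1}^n. -/
def chiCube {n : ℕ} (S : Finset (Fin n)) (x : Fin n → Bool) : ℝ := ∏ i ∈ S, bsgn (x i)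

/-- expectation under the uniform distribution on a finite type. -/
def expec {α : Type*} [Fintype α] (f : α → ℝ) : ℝ := (∑ x, f x) / (Fintype.card α)

/-- Fourier coefficient f̂(S) = E_x[f(x)·χ_S(x)]. -/
def fhat {n : ℕ} (f : (Fin n → Bool) → ℝ) (S : Finset (Fin n)) : ℝ :=
  expec fun x => f x * chiCube S x

/-- variance under the uniform distribution. -/
def cubeVar {α : Type*} [Fintype α] (f : α → ℝ) : ℝ :=
  expec (fun x => f x ^ 2) - (expec f) ^ 2

/-- merge: equals `x` on `J` and `z` off `J`. -/
def mergeOn {n : ℕ} (J : Finset (Fin n)) (x z : Fin n → Bool) : Fin n → Bool :=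
  fun i => if i ∈ J then x i else z i

open Function

lemma bsgn_false : bsgn false = 1 := rfl

lemma bsgn_true : bsgn true = -1 := rfl

lemma bsgn_sq (b : Bool) : bsgn b ^ 2 = 1 := by cases b <;> simp [bsgn]

lemma abs_bsgn (b : Bool) : |bsgn b| = 1 := by cases b <;> simp [bsgn]

lemma chiCube_singleton {n : ℕ} (i : Fin n) (x : Fin n → Bool) : chiCube {i} x = bsgn (x i) := by
  simp [chiCube]

lemma expec_const {α : Type*} [Fintype α] [Nonempty α] (c : ℝ) : expec (fun _ : α => c) = c := by
  simp [expec]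

lemma cubeVar_eq_expec_sq_sub {α : Type*} [Fintype α] [Nonempty α] (g : α → ℝ) :
    cubeVar g = expec fun x => (g x - expec g) ^ 2 := by
  have hN : (Fintype.card α : ℝ) ≠ 0 := by positivity
  simp only [cubeVar, expec, sub_sq, sum_add_distrib, sum_sub_distrib, ← sum_mul, ← mul_sum,
    sum_const, card_univ, nsmul_eq_mul]
  field_simp
  ring

lemma sq_expec_mul_le_cubeVar {α : Type*} [Fintype α] [Nonempty α] (g χ : α → ℝ)
    (hχ : ∑ x, χ x = 0) (hχ_sq : ∀ x, χ x ^ 2 = 1) :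
    expec (fun x => g x * χ x) ^ 2 ≤ cubeVar g := by
  set c := expec g
  have hN : (0 : ℝ) < Fintype.card α := by positivity
  have hcentered : ∑ x, g x * χ x = ∑ x, (g x - c) * χ x := by
    simp only [sub_mul, sum_sub_distrib, ← mul_sum, hχ, mul_zero, sub_zero]
  have hCS := sum_mul_sq_le_sq_mul_sq univ (fun x => g x - c) χ
  simp only [hχ_sq, sum_const, card_univ, nsmul_eq_mul, mul_one] at hCS
  rw [cubeVar_eq_expec_sq_sub, expec, expec, hcentered, div_pow, div_le_div_iff₀ (by positivity) hN]
  nlinarith [mul_le_mul_of_nonneg_right hCS hN.le]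

section Cube

variable {n : ℕ}

lemma sum_update_not (i : Fin n) (h : (Fin n → Bool) → ℝ) :
    ∑ y, h (update y i (!y i)) = ∑ y, h y := by
  have hinv : Involutive fun y : Fin n → Bool => update y i (!y i) := by
    intro y
    ext j
    rcases eq_or_ne j i with rfl | hj <;> simp [update_of_ne, *]
  exact hinv.bijective.sum_comp h

lemma sum_update_false_add_update_true (i : Fin n) (h : (Fin n → Bool) → ℝ) :
    ∑ y, (h (update y i false) + h (update y i true)) = 2 * ∑ y, h y := by
  have hpair : ∀ y : Fin n → Bool,
      h (update y i false) + h (update y i true) = h (update y i (y i)) + h (update y i (!y i)) := by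
    intro y
    cases y i <;> simp [add_comm]
  simp only [hpair, update_eq_self, sum_add_distrib, sum_update_not]
  ring

lemma sum_mul_bsgn_eq (i : Fin n) (b : Bool) (h : (Fin n → Bool) → ℝ) :
    ∑ y, h y * bsgn (y i) = bsgn b * (∑ y, h (update y i b) - ∑ y, h y) := by
  have hsum := sum_update_false_add_update_true i h
  have hcoef := sum_update_false_add_update_true i fun y => h y * bsgn (y i)
  simp only [update_self, bsgn_false, bsgn_true, sum_add_distrib, ← sum_mul] at hsum hcoef
  cases b <;> simp only [bsgn_false, bsgn_true] <;> linarith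

lemma sum_bsgn_eq_zero (i : Fin n) : ∑ y : Fin n → Bool, bsgn (y i) = 0 := by
  simpa using sum_mul_bsgn_eq i true fun _ => 1

lemma fhat_singleton_eq (h : (Fin n → Bool) → ℝ) (i : Fin n) (b : Bool) :
    fhat h {i} = bsgn b * (expec (fun y => h (update y i b)) - expec h) := by
  simp only [fhat, expec, chiCube_singleton, sum_mul_bsgn_eq i b h]
  ring

lemma sq_fhat_singleton_le_cubeVar (h : (Fin n → Bool) → ℝ) (i : Fin n) :
    fhat h {i} ^ 2 ≤ cubeVar h := by
  simpa only [fhat, chiCube_singleton] using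
    sq_expec_mul_le_cubeVar h (fun y => bsgn (y i)) (sum_bsgn_eq_zero i) fun y => bsgn_sq (y i)

end Cube

section Hybrid

variable {n : ℕ}

def prefixMerge (k : ℕ) (y z : Fin n → Bool) : Fin n → Bool :=
  fun j => if (j : ℕ) < k then y j else z j

lemma prefixMerge_zero (y z : Fin n → Bool) : prefixMerge 0 y z = z := by
  ext j; simp [prefixMerge]

lemma prefixMerge_self (y z : Fin n → Bool) : prefixMerge n y z = y := by
  ext j; simp [prefixMerge]

lemma prefixMerge_succ_update (i : Fin n) (y z : Fin n → Bool) :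
    prefixMerge (i + 1) (update y i (z i)) z = prefixMerge i y z := by
  ext j
  rcases eq_or_ne j i with rfl | hj
  · simp [prefixMerge]
  · have hji : (j : ℕ) < i + 1 ↔ (j : ℕ) < i := by
      have := Fin.val_ne_of_ne hj
      omega
    simp [prefixMerge, update_of_ne hj, hji]

lemma prefixMerge_succ_eq_ite (i : Fin n) (y z : Fin n → Bool) :
    prefixMerge (i + 1) y z = fun j => if j ≤ i then y j else z j := by
  funext j
  simp only [prefixMerge, Fin.le_def, Nat.lt_succ_iff]

lemma exists_abs_fhat_prefixMerge_ge (f : (Fin n → Bool) → ℝ) (z : Fin n → Bool) (hn : 0 < n) :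
    ∃ i : Fin n, |f z - expec f| / n ≤ |fhat (fun y => f (prefixMerge (i + 1) y z)) {i}| := by
  set F : ℕ → ℝ := fun k => expec fun y => f (prefixMerge k y z)
  have hstep : ∀ i : Fin n, |fhat (fun y => f (prefixMerge (i + 1) y z)) {i}| = |F i - F (i + 1)| := by
    intro i
    rw [fhat_singleton_eq _ i (z i), abs_mul, abs_bsgn, one_mul]
    simp only [prefixMerge_succ_update, F]
  have htotal : |f z - expec f| ≤ ∑ i : Fin n, |F i - F (i + 1)| := by
    have hends : f z - expec f = ∑ k ∈ range n, (F k - F (k + 1)) := by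
      rw [sum_range_sub']
      simp only [F, prefixMerge_zero, prefixMerge_self, expec_const]
    rw [hends, Fin.sum_univ_eq_sum_range (fun k => |F k - F (k + 1)|)]
    exact abs_sum_le_sum_abs _ _
  obtain ⟨i, -, hi⟩ := exists_le_of_sum_le (univ_nonempty_iff.mpr ⟨⟨0, hn⟩⟩)
    (f := fun _ => |f z - expec f| / n) (g := fun i : Fin n => |F i - F (i + 1)|) (by
      simpa [sum_const, card_univ, Fintype.card_fin, nsmul_eq_mul, mul_div_cancel₀, hn.ne']
        using htotal)
  exact ⟨i, (hstep i).symm ▸ hi⟩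

end Hybrid

section Odd

variable {n : ℕ} {f : (Fin n → Bool) → ℝ}

lemma sum_eq_zero_of_odd (hodd : ∀ x, f (fun i => !(x i)) = -f x) : ∑ x, f x = 0 := by
  have hinv : Involutive fun x : Fin n → Bool => fun i => !(x i) := fun x => by simp
  have hsum := hinv.bijective.sum_comp f
  simp only [hodd, sum_neg_distrib] at hsum
  linarith

lemma expec_eq_zero_of_odd (hodd : ∀ x, f (fun i => !(x i)) = -f x) : expec f = 0 := by
  simp [expec, sum_eq_zero_of_odd hodd]

lemma pos_of_odd_of_ne_zero (hodd : ∀ x, f (fun i => !(x i)) = -f x) (hne : f ≠ 0) : 0 < n := by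
  rcases Nat.eq_zero_or_pos n with rfl | hn
  · refine absurd (funext fun x => ?_) hne
    have hself : (fun i : Fin 0 => !(x i)) = x := funext finZeroElim
    have hx := hodd x
    rw [hself] at hx
    simp only [Pi.zero_apply]
    linarith
  · exact hn

lemma abs_le_of_odd_of_isMax (hodd : ∀ x, f (fun i => !(x i)) = -f x) {x : Fin n → Bool}
    (hmax : ∀ y, f y ≤ f x) (y : Fin n → Bool) : |f y| ≤ f x :=
  abs_le.mpr ⟨by linarith [hodd y, hmax fun i => !(y i)], hmax y⟩

lemma sup'_abs_eq_of_odd (hodd : ∀ x, f (fun i => !(x i)) = -f x) {x : Fin n → Bool}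
    (hmax : ∀ y, f y ≤ f x) : univ.sup' univ_nonempty (fun y => |f y|) = f x :=
  le_antisymm (sup'_le _ _ fun y _ => abs_le_of_odd_of_isMax hodd hmax y)
    (le_sup'_of_le _ (mem_univ x) (le_abs_self _))

end Odd

theorem stmt_14 (n : ℕ) (f : (Fin n → Bool) → ℝ)
    (hodd : ∀ x, f (fun i => !(x i)) = - f x) (hne : f ≠ 0) (M : ℝ)
    (hM : M = univ.sup' Finset.univ_nonempty fun x : Fin n → Bool => |f x|) :
    ∃ xstar : Fin n → Bool, (∀ y, f y ≤ f xstar) ∧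
      ∃ i : Fin n,
        |fhat (fun y : Fin n → Bool => f (fun j => if j ≤ i then y j else xstar j)) {i}| ≥ M / n ∧
        cubeVar (fun y : Fin n → Bool => f (fun j => if j ≤ i then y j else xstar j)) ≥ M ^ 2 / n ^ 2 := by
  have hn := pos_of_odd_of_ne_zero hodd hne
  obtain ⟨xstar, -, hxstar⟩ := exists_max_image univ f univ_nonempty
  have hmax : ∀ y, f y ≤ f xstar := fun y => hxstar y (mem_univ y)
  have hMx : M = f xstar := hM.trans (sup'_abs_eq_of_odd hodd hmax)
  have hM_nonneg : 0 ≤ M := hMx ▸ (abs_nonneg _).trans (abs_le_of_odd_of_isMax hodd hmax xstar)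
  obtain ⟨i, hi⟩ := exists_abs_fhat_prefixMerge_ge f xstar hn
  rw [expec_eq_zero_of_odd hodd, sub_zero, ← hMx, abs_of_nonneg hM_nonneg] at hi
  simp only [prefixMerge_succ_eq_ite] at hi
  refine ⟨xstar, hmax, i, hi, ?_⟩
  calc M ^ 2 / n ^ 2 = (M / n) ^ 2 := (div_pow _ _ _).symm
    _ ≤ |fhat _ {i}| ^ 2 := pow_le_pow_left₀ (by positivity) hi 2
    _ = fhat _ {i} ^ 2 := sq_abs _
    _ ≤ cubeVar _ := sq_fhat_singleton_le_cubeVar _ i
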